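/- For n ∈ ℕ let f_1^{(n)}(ξ,τ) = f_2^{(n)}(ξ,τ) = χ_{[-1,1]}(ξ − n) χ_{[-1,1]}(τ + ξ²) and f_3^{(n)}(ξ,τ) = f_4^{(n)}(ξ,τ) = χ_{[-1,1]}(ξ + n) χ_{[-1,1]}(τ − ξ²) on ℝ². Then there exists c > 0 (independent of n) such that the fourfold convolution satisfies (f_1^{(n)} * f_2^{(n)} * f_3^{(n)} * f_4^{(n)})(ξ,τ) ≥ c χ_{[-c,c]}(2nξ) χ_{[-c,c]}(τ) for all n large. Consequently, the estimate ‖u₁u₂ū₃ū₄‖_{X^+_{s,b'}} ≤ c ∏_{i=1}^4 ‖u_i‖_{X^+_{s,b}} on ℝ fails for all s < −1/8 and all b, b' ∈ ℝ. -/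

import Mathlib

open MeasureTheory
open scoped ENNReal

/-- Japanese bracket. -/
noncomputable def jb (x : ℝ) : ℝ := Real.sqrt (1 + x ^ 2)

/-- Fourfold convolution on `ℝ × ℝ` (real-valued version). -/
noncomputable def conv4R (f g h k : ℝ × ℝ → ℝ) : ℝ × ℝ → ℝ := fun p =>
  ∫ ξ₁ : ℝ, ∫ ξ₂ : ℝ, ∫ ξ₃ : ℝ, ∫ τ₁ : ℝ, ∫ τ₂ : ℝ, ∫ τ₃ : ℝ,
    f (ξ₁, τ₁) * g (ξ₂, τ₂) * h (ξ₃, τ₃) *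
      k (p.1 - ξ₁ - ξ₂ - ξ₃, p.2 - τ₁ - τ₂ - τ₃)

/-- Fourfold convolution on `ℝ × ℝ` (`ℝ≥0∞`-valued version). -/
noncomputable def conv4E (f g h k : ℝ × ℝ → ℝ≥0∞) : ℝ × ℝ → ℝ≥0∞ := fun p =>
  ∫⁻ ξ₁ : ℝ, ∫⁻ ξ₂ : ℝ, ∫⁻ ξ₃ : ℝ, ∫⁻ τ₁ : ℝ, ∫⁻ τ₂ : ℝ, ∫⁻ τ₃ : ℝ,
    f (ξ₁, τ₁) * g (ξ₂, τ₂) * h (ξ₃, τ₃) *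
      k (p.1 - ξ₁ - ξ₂ - ξ₃, p.2 - τ₁ - τ₂ - τ₃)

/-- The `X^+_{s,b}` norm on the Fourier side: weight `⟨ξ⟩^s ⟨τ+ξ²⟩^b`. -/
noncomputable def XpNorm (s b : ℝ) (F : ℝ × ℝ → ℝ≥0∞) : ℝ≥0∞ :=
  (∫⁻ p : ℝ × ℝ,
      ENNReal.ofReal (jb p.1 ^ (2 * s) * jb (p.2 + p.1 ^ 2) ^ (2 * b)) * F p ^ 2) ^
    ((1 : ℝ) / 2)

/-- The `X^-_{s,b}` norm (for conjugated factors): weight `⟨ξ⟩^s ⟨τ−ξ²⟩^b`. -/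
noncomputable def XmNorm (s b : ℝ) (F : ℝ × ℝ → ℝ≥0∞) : ℝ≥0∞ :=
  (∫⁻ p : ℝ × ℝ,
      ENNReal.ofReal (jb p.1 ^ (2 * s) * jb (p.2 - p.1 ^ 2) ^ (2 * b)) * F p ^ 2) ^
    ((1 : ℝ) / 2)

/-- `f₁^{(n)} = f₂^{(n)} = χ_{[-1,1]}(ξ − n) χ_{[-1,1]}(τ + ξ²)`. -/
noncomputable def g₁₂ (n : ℕ) : ℝ × ℝ → ℝ := fun p =>
  (if p.1 - (n : ℝ) ∈ Set.Icc (-1 : ℝ) 1 then 1 else 0) *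
    (if p.2 + p.1 ^ 2 ∈ Set.Icc (-1 : ℝ) 1 then 1 else 0)

/-- `f₃^{(n)} = f₄^{(n)} = χ_{[-1,1]}(ξ + n) χ_{[-1,1]}(τ − ξ²)`. -/
noncomputable def g₃₄ (n : ℕ) : ℝ × ℝ → ℝ := fun p =>
  (if p.1 + (n : ℝ) ∈ Set.Icc (-1 : ℝ) 1 then 1 else 0) *
    (if p.2 - p.1 ^ 2 ∈ Set.Icc (-1 : ℝ) 1 then 1 else 0)

/-!
Put `f₁ = f₂` near `(n, -n²)` and `f₃ = f₄` near `(-n, n²)` on the respective parabolas. If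
`ξ₁ + ξ₂ + ξ₃ + ξ₄ = ξ` with `ξ₁, ξ₂ ≈ n` and `ξ₃, ξ₄ ≈ -n`, then
`ξ₁² + ξ₂² - ξ₃² - ξ₄² = 2nξ + O(1)`, so on a box of side `1/8` in `(ξ₁, ξ₂, ξ₃, τ₁, τ₂, τ₃)` all
four factors of the convolution integrand equal `1` as soon as `|2nξ|, |τ| ≤ 1/8`: the
convolution is `≥ 8⁻⁶` on a rectangle of area `≈ 1/n`. The real-valued iterated integral is
finite and agrees with the `ℝ≥0∞`-valued one by Fubini–Tonelli on `ℝ⁶`.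

Testing the estimate on these bumps, the left side is `≳ n^(-1/2)`, while each `X_{s,b}` norm
on the right is `≲ n^s`, since the bumps have unit modulation and frequency `≈ n`. Thus
`n^(-1/2) ≲ n^(4s)`, which fails as `n → ∞` once `s < -1/8`.
-/

open Set Filter Topology

section Integrals

theorem integral_prod_of_sections {α β : Type*} [MeasurableSpace α] [MeasurableSpace β]
    {μ : Measure α} {ν : Measure β} [SFinite μ] [SFinite ν] {F : α × β → ℝ}
    (hF : Integrable F (μ.prod ν)) {G : α → ℝ}
    (hG : ∀ x, Integrable (fun y => F (x, y)) ν → ∫ y, F (x, y) ∂ν = G x) :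
    ∫ z, F z ∂(μ.prod ν) = ∫ x, G x ∂μ := by
  rw [integral_prod F hF]
  exact integral_congr_ae (hF.prod_right_ae.mono hG)

theorem mul_le_lintegral_of_forall_mem_Icc {F : ℝ → ℝ≥0∞} {c : ℝ≥0∞} {a δ : ℝ}
    (hF : ∀ x ∈ Icc a (a + δ), c ≤ F x) : c * .ofReal δ ≤ ∫⁻ x, F x := by
  calc c * .ofReal δ = ∫⁻ x, (Icc a (a + δ)).indicator (fun _ => c) x := by
        rw [lintegral_indicator_const measurableSet_Icc, Real.volume_Icc, add_sub_cancel_left]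
    _ ≤ ∫⁻ x, F x := lintegral_mono (indicator_le hF)

theorem ofReal_indicator_one {α : Type*} (s : Set α) :
    (fun x => ENNReal.ofReal (s.indicator 1 x)) = s.indicator 1 := by
  ext x; by_cases hx : x ∈ s <;> simp [hx]

end Integrals

section Convolution

/-- Coordinates of `ℝ⁶` are ordered `(ξ₁, ξ₂, ξ₃, τ₁, τ₂, τ₃)`, as in the iterated integrals
of `conv4E` and `conv4R`. -/
def conv4Kernel {M : Type*} [Mul M] (f g h k : ℝ × ℝ → M) (p : ℝ × ℝ)
    (z : ℝ × ℝ × ℝ × ℝ × ℝ × ℝ) : M :=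
  f (z.1, z.2.2.2.1) * g (z.2.1, z.2.2.2.2.1) * h (z.2.2.1, z.2.2.2.2.2) *
    k (p.1 - z.1 - z.2.1 - z.2.2.1, p.2 - z.2.2.2.1 - z.2.2.2.2.1 - z.2.2.2.2.2)

theorem measurable_conv4Kernel {M : Type*} [Mul M] [MeasurableSpace M] [MeasurableMul₂ M]
    {f g h k : ℝ × ℝ → M} (hf : Measurable f) (hg : Measurable g) (hh : Measurable h)
    (hk : Measurable k) (p : ℝ × ℝ) : Measurable (conv4Kernel f g h k p) := by
  unfold conv4Kernel; fun_prop

theorem conv4E_eq_lintegral {f g h k : ℝ × ℝ → ℝ≥0∞} (hf : Measurable f) (hg : Measurable g)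
    (hh : Measurable h) (hk : Measurable k) (p : ℝ × ℝ) :
    conv4E f g h k p = ∫⁻ z, conv4Kernel f g h k p z := by
  have hK := measurable_conv4Kernel hf hg hh hk p
  symm
  iterate 5
    rw [Measure.volume_eq_prod, lintegral_prod _ (by fun_prop)]
    refine lintegral_congr fun _ => ?_
  rfl

theorem conv4E_le_mul_lintegral {f g h k : ℝ × ℝ → ℝ≥0∞} (hf : Measurable f) (hg : Measurable g)
    (hh : Measurable h) (hk : ∀ q, k q ≤ 1) (p : ℝ × ℝ) :
    conv4E f g h k p ≤ (∫⁻ q, f q) * (∫⁻ q, g q) * ∫⁻ q, h q := by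
  have hF : Measurable fun ξ => ∫⁻ τ, f (ξ, τ) := hf.lintegral_prod_right'
  have hG : Measurable fun ξ => ∫⁻ τ, g (ξ, τ) := hg.lintegral_prod_right'
  have hH : Measurable fun ξ => ∫⁻ τ, h (ξ, τ) := hh.lintegral_prod_right'
  calc conv4E f g h k p
      ≤ ∫⁻ ξ₁, ∫⁻ ξ₂, ∫⁻ ξ₃, ∫⁻ τ₁, ∫⁻ τ₂, ∫⁻ τ₃, f (ξ₁, τ₁) * g (ξ₂, τ₂) * h (ξ₃, τ₃) := by
        unfold conv4E
        gcongr ∫⁻ ξ₁, ∫⁻ ξ₂, ∫⁻ ξ₃, ∫⁻ τ₁, ∫⁻ τ₂, ∫⁻ τ₃, ?_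
        exact mul_le_of_le_one_right' (hk _)
    _ = (∫⁻ q, f q) * (∫⁻ q, g q) * ∫⁻ q, h q := by
        simp (disch := fun_prop) only [lintegral_const_mul, lintegral_mul_const]
        rw [Measure.volume_eq_prod, lintegral_prod _ hf.aemeasurable,
          lintegral_prod _ hg.aemeasurable, lintegral_prod _ hh.aemeasurable]

theorem conv4R_eq_integral {f g h k : ℝ × ℝ → ℝ} {p : ℝ × ℝ}
    (hK : Integrable (conv4Kernel f g h k p)) :
    conv4R f g h k p = ∫ z, conv4Kernel f g h k p z := by
  symm
  iterate 4
    rw [Measure.volume_eq_prod]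
    refine integral_prod_of_sections ‹_› fun _ _ => ?_
  rw [Measure.volume_eq_prod]
  exact integral_prod _ ‹_›

theorem conv4R_eq_toReal_conv4E {f g h k : ℝ × ℝ → ℝ} (hf : Measurable f) (hg : Measurable g)
    (hh : Measurable h) (hk : Measurable k) (hf₀ : 0 ≤ f) (hg₀ : 0 ≤ g) (hh₀ : 0 ≤ h)
    (hk₀ : 0 ≤ k) {p : ℝ × ℝ}
    (hfin : conv4E (fun q => .ofReal (f q)) (fun q => .ofReal (g q)) (fun q => .ofReal (h q))
      (fun q => .ofReal (k q)) p ≠ ∞) :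
    conv4R f g h k p = (conv4E (fun q => .ofReal (f q)) (fun q => .ofReal (g q))
      (fun q => .ofReal (h q)) (fun q => .ofReal (k q)) p).toReal := by
  set K := conv4Kernel f g h k p
  have hK₀ : 0 ≤ᵐ[volume] K := ae_of_all _ fun z =>
    mul_nonneg (mul_nonneg (mul_nonneg (hf₀ _) (hg₀ _)) (hh₀ _)) (hk₀ _)
  have hKm : Measurable K := measurable_conv4Kernel hf hg hh hk p
  have hE : ∫⁻ z, .ofReal (K z) = conv4E (fun q => .ofReal (f q)) (fun q => .ofReal (g q))
      (fun q => .ofReal (h q)) (fun q => .ofReal (k q)) p := by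
    rw [conv4E_eq_lintegral (by fun_prop) (by fun_prop) (by fun_prop) (by fun_prop)]
    refine lintegral_congr fun z => ?_
    simp only [K, conv4Kernel, ENNReal.ofReal_mul (hf₀ _),
      ENNReal.ofReal_mul (mul_nonneg (hf₀ _) (hg₀ _)),
      ENNReal.ofReal_mul (mul_nonneg (mul_nonneg (hf₀ _) (hg₀ _)) (hh₀ _))]
  have hKi : Integrable K :=
    ⟨hKm.aestronglyMeasurable, (hasFiniteIntegral_iff_ofReal hK₀).2 (hE ▸ hfin.lt_top)⟩
  rw [conv4R_eq_integral hKi, integral_eq_lintegral_of_nonneg_ae hK₀ hKm.aestronglyMeasurable,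
    hE]

end Convolution

section Bumps

def bumpSet (a : ℝ) (φ : ℝ → ℝ) : Set (ℝ × ℝ) :=
  {p | p.1 - a ∈ Icc (-1) 1 ∧ p.2 - φ p.1 ∈ Icc (-1) 1}

theorem sub_mem_Icc_neg_one_one_iff {x c : ℝ} :
    x - c ∈ Icc (-1) 1 ↔ x ∈ Icc (c - 1) (c + 1) := by
  simp only [mem_Icc]; constructor <;> intro h <;> constructor <;> linarith [h.1, h.2]

theorem mk_mem_bumpSet {a x y : ℝ} {φ : ℝ → ℝ} (hx : x ∈ Icc a (a + 1))
    (hy : y ∈ Icc (φ x) (φ x + 1)) : (x, y) ∈ bumpSet a φ :=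
  ⟨⟨by linarith [hx.1], by linarith [hx.2]⟩, ⟨by linarith [hy.1], by linarith [hy.2]⟩⟩

theorem measurableSet_bumpSet (a : ℝ) {φ : ℝ → ℝ} (hφ : Measurable φ) :
    MeasurableSet (bumpSet a φ) :=
  (measurableSet_Icc.preimage (by fun_prop)).inter (measurableSet_Icc.preimage (by fun_prop))

theorem volume_bumpSet (a : ℝ) {φ : ℝ → ℝ} (hφ : Measurable φ) : volume (bumpSet a φ) = 4 := by
  have hsec (x : ℝ) : volume (Prod.mk x ⁻¹' bumpSet a φ) =
      (Icc (a - 1) (a + 1)).indicator (fun _ => 2) x := by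
    by_cases hx : x ∈ Icc (a - 1) (a + 1)
    · have : Prod.mk x ⁻¹' bumpSet a φ = Icc (φ x - 1) (φ x + 1) := by
        ext y
        simp only [bumpSet, mem_preimage, mem_ofPred_eq, sub_mem_Icc_neg_one_one_iff, hx,
          true_and]
      rw [this, indicator_of_mem hx, Real.volume_Icc]
      norm_num
    · have : Prod.mk x ⁻¹' bumpSet a φ = ∅ := by
        ext y
        simp only [bumpSet, mem_preimage, mem_ofPred_eq, sub_mem_Icc_neg_one_one_iff, hx,
          false_and, mem_empty_iff_false]
      rw [this, indicator_of_notMem hx, measure_empty]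
  rw [Measure.volume_eq_prod, Measure.prod_apply (measurableSet_bumpSet a hφ),
    lintegral_congr hsec, lintegral_indicator measurableSet_Icc, setLIntegral_const,
    Real.volume_Icc]
  norm_num

def S₁₂ (n : ℕ) : Set (ℝ × ℝ) := bumpSet n fun ξ => -ξ ^ 2

def S₃₄ (n : ℕ) : Set (ℝ × ℝ) := bumpSet (-n) fun ξ => ξ ^ 2

theorem measurableSet_S₁₂ (n : ℕ) : MeasurableSet (S₁₂ n) := measurableSet_bumpSet _ (by fun_prop)

theorem measurableSet_S₃₄ (n : ℕ) : MeasurableSet (S₃₄ n) := measurableSet_bumpSet _ (by fun_prop)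

theorem g₁₂_eq_indicator (n : ℕ) : g₁₂ n = (S₁₂ n).indicator 1 := by
  ext p
  simp only [g₁₂, indicator_apply, S₁₂, bumpSet, mem_ofPred_eq, sub_neg_eq_add, Pi.one_apply]
  split_ifs <;> simp_all

theorem g₃₄_eq_indicator (n : ℕ) : g₃₄ n = (S₃₄ n).indicator 1 := by
  ext p
  simp only [g₃₄, indicator_apply, S₃₄, bumpSet, mem_ofPred_eq, sub_neg_eq_add, Pi.one_apply]
  split_ifs <;> simp_all

theorem sub_sub_sub_mem_S₃₄ {n : ℕ} {ξ τ ξ₁ ξ₂ ξ₃ τ₁ τ₂ τ₃ : ℝ} (hn : 1 ≤ n)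
    (hξ : |2 * n * ξ| ≤ 1 / 8) (hτ : |τ| ≤ 1 / 8) (h₁ : ξ₁ ∈ Icc (n : ℝ) (n + 1 / 8))
    (h₂ : ξ₂ ∈ Icc (n : ℝ) (n + 1 / 8)) (h₃ : ξ₃ ∈ Icc (-n : ℝ) (-n + 1 / 8))
    (hτ₁ : τ₁ ∈ Icc (-ξ₁ ^ 2) (-ξ₁ ^ 2 + 1 / 8)) (hτ₂ : τ₂ ∈ Icc (-ξ₂ ^ 2) (-ξ₂ ^ 2 + 1 / 8))
    (hτ₃ : τ₃ ∈ Icc (ξ₃ ^ 2) (ξ₃ ^ 2 + 1 / 8)) :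
    (ξ - ξ₁ - ξ₂ - ξ₃, τ - τ₁ - τ₂ - τ₃) ∈ S₃₄ n := by
  have hn' : (1 : ℝ) ≤ n := by exact_mod_cast hn
  have hξ' : |ξ| ≤ 1 / 16 := by
    rw [abs_mul, abs_of_pos (by positivity : (0 : ℝ) < 2 * n)] at hξ
    nlinarith [abs_nonneg ξ]
  obtain ⟨h₁l, h₁u⟩ := h₁; obtain ⟨h₂l, h₂u⟩ := h₂; obtain ⟨h₃l, h₃u⟩ := h₃
  obtain ⟨hτ₁l, hτ₁u⟩ := hτ₁; obtain ⟨hτ₂l, hτ₂u⟩ := hτ₂; obtain ⟨hτ₃l, hτ₃u⟩ := hτ₃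
  obtain ⟨hξl, hξu⟩ := abs_le.1 hξ'
  obtain ⟨hnξl, hnξu⟩ := abs_le.1 hξ
  obtain ⟨hτl, hτu⟩ := abs_le.1 hτ
  -- the fourth frequency is `-n + d`, and the resonance function equals `2 n ξ` up to `O(1)`
  set d := ξ - (ξ₁ - n) - (ξ₂ - n) - (ξ₃ + n)
  have key : τ - τ₁ - τ₂ - τ₃ - (ξ - ξ₁ - ξ₂ - ξ₃) ^ 2 = τ + 2 * n * ξ - (τ₁ + ξ₁ ^ 2)
      - (τ₂ + ξ₂ ^ 2) - (τ₃ - ξ₃ ^ 2) + (ξ₁ - n) ^ 2 + (ξ₂ - n) ^ 2 - (ξ₃ + n) ^ 2 - d ^ 2 := by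
    ring
  have hsq {x r : ℝ} (hx : x ∈ Icc (-r) r) : x ^ 2 ≤ r ^ 2 := sq_le_sq' hx.1 hx.2
  have ha₁ := hsq (show ξ₁ - n ∈ Icc (-(1 / 8)) (1 / 8) from ⟨by linarith, by linarith⟩)
  have ha₂ := hsq (show ξ₂ - n ∈ Icc (-(1 / 8)) (1 / 8) from ⟨by linarith, by linarith⟩)
  have ha₃ := hsq (show ξ₃ + n ∈ Icc (-(1 / 8)) (1 / 8) from ⟨by linarith, by linarith⟩)
  have hd := hsq (show d ∈ Icc (-(1 / 2)) (1 / 2) from ⟨by linarith, by linarith⟩)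
  refine ⟨show ξ - ξ₁ - ξ₂ - ξ₃ - -n ∈ Icc (-1) 1 from ⟨by linarith, by linarith⟩,
    show τ - τ₁ - τ₂ - τ₃ - (ξ - ξ₁ - ξ₂ - ξ₃) ^ 2 ∈ Icc (-1) 1 from ?_⟩
  rw [key]
  constructor <;>
    linarith [sq_nonneg d, sq_nonneg (ξ₁ - n), sq_nonneg (ξ₂ - n), sq_nonneg (ξ₃ + n)]

theorem ofReal_pow_le_conv4E_bumps {n : ℕ} (hn : 1 ≤ n) {ξ τ : ℝ} (hξ : |2 * n * ξ| ≤ 1 / 8)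
    (hτ : |τ| ≤ 1 / 8) :
    ENNReal.ofReal (1 / 8) ^ 6 ≤ conv4E ((S₁₂ n).indicator 1) ((S₁₂ n).indicator 1)
      ((S₃₄ n).indicator 1) ((S₃₄ n).indicator 1) (ξ, τ) := by
  rw [show ENNReal.ofReal (1 / 8) ^ 6 = 1 * .ofReal (1 / 8) * .ofReal (1 / 8) * .ofReal (1 / 8)
    * .ofReal (1 / 8) * .ofReal (1 / 8) * .ofReal (1 / 8) by ring]
  refine mul_le_lintegral_of_forall_mem_Icc (a := n) fun ξ₁ h₁ => ?_
  refine mul_le_lintegral_of_forall_mem_Icc (a := n) fun ξ₂ h₂ => ?_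
  refine mul_le_lintegral_of_forall_mem_Icc (a := -n) fun ξ₃ h₃ => ?_
  refine mul_le_lintegral_of_forall_mem_Icc (a := -ξ₁ ^ 2) fun τ₁ hτ₁ => ?_
  refine mul_le_lintegral_of_forall_mem_Icc (a := -ξ₂ ^ 2) fun τ₂ hτ₂ => ?_
  refine mul_le_lintegral_of_forall_mem_Icc (a := ξ₃ ^ 2) fun τ₃ hτ₃ => ?_
  have hsub {a : ℝ} : Icc a (a + 1 / 8) ⊆ Icc a (a + 1) := Icc_subset_Icc_right (by linarith)
  have h₁₂ {x y : ℝ} (hx : x ∈ Icc (n : ℝ) (n + 1 / 8))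
      (hy : y ∈ Icc (-x ^ 2) (-x ^ 2 + 1 / 8)) : (x, y) ∈ S₁₂ n :=
    mk_mem_bumpSet (hsub hx) (hsub hy)
  have h₃₄ : (ξ₃, τ₃) ∈ S₃₄ n := mk_mem_bumpSet (hsub h₃) (hsub hτ₃)
  rw [indicator_of_mem (h₁₂ h₁ hτ₁), indicator_of_mem (h₁₂ h₂ hτ₂), indicator_of_mem h₃₄,
    indicator_of_mem (sub_sub_sub_mem_S₃₄ hn hξ hτ h₁ h₂ h₃ hτ₁ hτ₂ hτ₃)]
  simp

theorem conv4E_bumps_ne_top (n : ℕ) (p : ℝ × ℝ) : conv4E ((S₁₂ n).indicator 1)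
    ((S₁₂ n).indicator 1) ((S₃₄ n).indicator 1) ((S₃₄ n).indicator 1) p ≠ ∞ := by
  have h₁₂ := measurable_one.indicator (measurableSet_S₁₂ n) (f := (1 : ℝ × ℝ → ℝ≥0∞))
  have h₃₄ := measurable_one.indicator (measurableSet_S₃₄ n) (f := (1 : ℝ × ℝ → ℝ≥0∞))
  refine ((conv4E_le_mul_lintegral h₁₂ h₁₂ h₃₄ (k := (S₃₄ n).indicator 1)
    (fun _ => indicator_apply_le' (fun _ => le_rfl) fun _ => zero_le_one) p).trans_lt ?_).ne
  rw [lintegral_indicator_one (measurableSet_S₁₂ n), lintegral_indicator_one (measurableSet_S₃₄ n),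
    S₁₂, S₃₄, volume_bumpSet _ (by fun_prop), volume_bumpSet _ (by fun_prop)]
  norm_num

theorem conv4R_bumps_eq_toReal (n : ℕ) (p : ℝ × ℝ) :
    conv4R (g₁₂ n) (g₁₂ n) (g₃₄ n) (g₃₄ n) p = (conv4E ((S₁₂ n).indicator 1)
      ((S₁₂ n).indicator 1) ((S₃₄ n).indicator 1) ((S₃₄ n).indicator 1) p).toReal := by
  have h₁₂ := measurable_one.indicator (measurableSet_S₁₂ n) (f := (1 : ℝ × ℝ → ℝ))
  have h₃₄ := measurable_one.indicator (measurableSet_S₃₄ n) (f := (1 : ℝ × ℝ → ℝ))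
  have h₀ (S : Set (ℝ × ℝ)) : 0 ≤ S.indicator (1 : ℝ × ℝ → ℝ) :=
    indicator_nonneg fun _ _ => zero_le_one
  have h := conv4R_eq_toReal_conv4E h₁₂ h₁₂ h₃₄ h₃₄ (h₀ _) (h₀ _) (h₀ _) (h₀ _) (p := p)
  simp only [ofReal_indicator_one] at h
  rw [g₁₂_eq_indicator, g₃₄_eq_indicator]
  exact h (conv4E_bumps_ne_top n p)

end Bumps

section Weights

theorem one_le_jb (x : ℝ) : 1 ≤ jb x := Real.one_le_sqrt.2 (by nlinarith [sq_nonneg x])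

theorem abs_le_jb (x : ℝ) : |x| ≤ jb x := by
  rw [← Real.sqrt_sq_eq_abs]; exact Real.sqrt_le_sqrt (by linarith)

theorem jb_le_one_add_abs (x : ℝ) : jb x ≤ 1 + |x| :=
  Real.sqrt_le_iff.2 ⟨by positivity, by nlinarith [abs_nonneg x, sq_abs x]⟩

theorem jb_rpow_nonneg (x e : ℝ) : 0 ≤ jb x ^ e :=
  Real.rpow_nonneg (zero_le_one.trans (one_le_jb x)) e

theorem rpow_le_rpow_abs {y M e : ℝ} (hy : 1 ≤ y) (hyM : y ≤ M) : y ^ e ≤ M ^ |e| :=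
  (Real.rpow_le_rpow_of_exponent_le hy (le_abs_self e)).trans
    (Real.rpow_le_rpow (by linarith) hyM (abs_nonneg e))

theorem rpow_neg_abs_le_rpow {y M e : ℝ} (hy : 1 ≤ y) (hyM : y ≤ M) : M ^ (-|e|) ≤ y ^ e :=
  (Real.rpow_le_rpow_of_nonpos (by linarith) hyM (neg_nonpos.2 (abs_nonneg e))).trans
    (Real.rpow_le_rpow_of_exponent_le hy (neg_abs_le e))

theorem rpow_half_le_ofReal_sqrt {x : ℝ≥0∞} {M : ℝ} (hM : 0 ≤ M) (h : x ≤ .ofReal M) :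
    x ^ (1 / 2 : ℝ) ≤ .ofReal √M := by
  rw [Real.sqrt_eq_rpow, ← ENNReal.ofReal_rpow_of_nonneg hM (by norm_num)]
  exact ENNReal.rpow_le_rpow h (by norm_num)

theorem ofReal_sqrt_le_rpow_half {x : ℝ≥0∞} {M : ℝ} (hM : 0 ≤ M) (h : .ofReal M ≤ x) :
    .ofReal √M ≤ x ^ (1 / 2 : ℝ) := by
  rw [Real.sqrt_eq_rpow, ← ENNReal.ofReal_rpow_of_nonneg hM (by norm_num)]
  exact ENNReal.rpow_le_rpow h (by norm_num)

noncomputable def weightedNorm (s b : ℝ) (φ : ℝ → ℝ) (F : ℝ × ℝ → ℝ≥0∞) : ℝ≥0∞ :=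
  (∫⁻ p : ℝ × ℝ, .ofReal (jb p.1 ^ (2 * s) * jb (p.2 - φ p.1) ^ (2 * b)) * F p ^ 2) ^
    (1 / 2 : ℝ)

theorem XpNorm_eq_weightedNorm (s b : ℝ) : XpNorm s b = weightedNorm s b fun ξ => -ξ ^ 2 := by
  ext F; simp only [XpNorm, weightedNorm, sub_neg_eq_add]

theorem XmNorm_eq_weightedNorm (s b : ℝ) : XmNorm s b = weightedNorm s b fun ξ => ξ ^ 2 := rfl

theorem weightedNorm_indicator_bumpSet_le {s b a r : ℝ} {φ : ℝ → ℝ} (hφ : Measurable φ)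
    (hs : s ≤ 0) (hr : 0 < r) (har : r ≤ |a| - 1) :
    weightedNorm s b φ ((bumpSet a φ).indicator 1) ≤
      .ofReal √(4 * (r ^ (2 * s) * 2 ^ |2 * b|)) := by
  have hS := measurableSet_bumpSet a hφ
  have hw : ∀ p ∈ bumpSet a φ,
      jb p.1 ^ (2 * s) * jb (p.2 - φ p.1) ^ (2 * b) ≤ r ^ (2 * s) * 2 ^ |2 * b| := by
    rintro p ⟨h₁, h₂⟩
    have hrp : r ≤ jb p.1 := by
      have := abs_sub_abs_le_abs_sub a p.1
      rw [abs_sub_comm] at this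
      linarith [abs_le.2 h₁, abs_le_jb p.1]
    refine mul_le_mul (Real.rpow_le_rpow_of_nonpos hr hrp (by linarith))
      (rpow_le_rpow_abs (one_le_jb _) ((jb_le_one_add_abs _).trans ?_)) (jb_rpow_nonneg _ _)
      (Real.rpow_nonneg hr.le _)
    linarith [abs_le.2 h₂]
  refine rpow_half_le_ofReal_sqrt (by positivity) ?_
  calc ∫⁻ p, .ofReal (jb p.1 ^ (2 * s) * jb (p.2 - φ p.1) ^ (2 * b)) *
        (bumpSet a φ).indicator 1 p ^ 2
      ≤ ∫⁻ p, .ofReal (r ^ (2 * s) * 2 ^ |2 * b|) * (bumpSet a φ).indicator 1 p := by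
        refine lintegral_mono fun p => ?_
        by_cases hp : p ∈ bumpSet a φ
        · simp only [indicator_of_mem hp, Pi.one_apply, one_pow, mul_one]
          exact ENNReal.ofReal_le_ofReal (hw p hp)
        · simp [hp]
    _ = .ofReal (4 * (r ^ (2 * s) * 2 ^ |2 * b|)) := by
        rw [lintegral_const_mul _ (measurable_one.indicator hS), lintegral_indicator_one hS,
          volume_bumpSet a hφ, ENNReal.ofReal_mul (by norm_num : (0 : ℝ) ≤ 4), mul_comm]
        norm_num

theorem ofReal_sqrt_le_XpNorm {s b δ ε m : ℝ} {G : ℝ × ℝ → ℝ≥0∞} (hδ : 0 ≤ δ) (hδ₁ : δ ≤ 1)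
    (hε : 0 ≤ ε) (hε₁ : ε ≤ 1) (hm : 0 ≤ m)
    (hG : ∀ p ∈ Icc (-δ) δ ×ˢ Icc (-ε) ε, .ofReal m ≤ G p) :
    .ofReal √((3 : ℝ) ^ (-|2 * s|) * (3 : ℝ) ^ (-|2 * b|) * m ^ 2 * (2 * δ * (2 * ε))) ≤
      XpNorm s b G := by
  set w := (3 : ℝ) ^ (-|2 * s|) * (3 : ℝ) ^ (-|2 * b|)
  have hw₀ : 0 ≤ w := by positivity
  have hw : ∀ p ∈ Icc (-δ) δ ×ˢ Icc (-ε) ε,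
      w ≤ jb p.1 ^ (2 * s) * jb (p.2 + p.1 ^ 2) ^ (2 * b) := by
    rintro p ⟨h₁, h₂⟩
    have h₁' := abs_le.2 h₁
    have h₂' := abs_le.2 h₂
    have hsq : p.1 ^ 2 ≤ 1 := by nlinarith [sq_abs p.1, abs_nonneg p.1]
    refine mul_le_mul (rpow_neg_abs_le_rpow (one_le_jb _) ((jb_le_one_add_abs _).trans ?_))
      (rpow_neg_abs_le_rpow (one_le_jb _) ((jb_le_one_add_abs _).trans ?_)) (by positivity)
      (jb_rpow_nonneg _ _)
    · linarith
    · have := abs_add_le p.2 (p.1 ^ 2)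
      rw [abs_of_nonneg (sq_nonneg p.1)] at this
      linarith
  refine ofReal_sqrt_le_rpow_half (by positivity) ?_
  calc ENNReal.ofReal (w * m ^ 2 * (2 * δ * (2 * ε)))
      = ∫⁻ p, (Icc (-δ) δ ×ˢ Icc (-ε) ε).indicator (fun _ => .ofReal w * .ofReal m ^ 2) p := by
        rw [lintegral_indicator_const (measurableSet_Icc.prod measurableSet_Icc),
          Measure.volume_eq_prod, Measure.prod_prod, Real.volume_Icc, Real.volume_Icc,
          ENNReal.ofReal_mul (mul_nonneg hw₀ (sq_nonneg m)), ENNReal.ofReal_mul hw₀,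
          ENNReal.ofReal_pow hm, ENNReal.ofReal_mul (by linarith : 0 ≤ 2 * δ)]
        ring_nf
    _ ≤ ∫⁻ p, .ofReal (jb p.1 ^ (2 * s) * jb (p.2 + p.1 ^ 2) ^ (2 * b)) * G p ^ 2 :=
        lintegral_mono (indicator_le fun p hp =>
          mul_le_mul' (ENNReal.ofReal_le_ofReal (hw p hp)) (pow_le_pow_left' (hG p hp) 2))

end Weights

section Counterexample

variable {s b : ℝ} {n : ℕ}

theorem ofReal_sqrt_le_XpNorm_conv4E_bumps (hn : 1 ≤ n) :
    .ofReal √((3 : ℝ) ^ (-|2 * s|) * (3 : ℝ) ^ (-|2 * b|) * ((1 / 8) ^ 6) ^ 2 / 32 / n) ≤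
      XpNorm s b (conv4E ((S₁₂ n).indicator 1) ((S₁₂ n).indicator 1) ((S₃₄ n).indicator 1)
        ((S₃₄ n).indicator 1)) := by
  have hn' : (1 : ℝ) ≤ n := by exact_mod_cast hn
  convert ofReal_sqrt_le_XpNorm (δ := 1 / (16 * n)) (ε := 1 / 8) (m := (1 / 8) ^ 6)
    (by positivity) (by rw [div_le_one (by positivity)]; linarith) (by norm_num) (by norm_num)
    (by norm_num) ?_ using 3
  · field_simp; ring
  rintro ⟨ξ, τ⟩ ⟨hξ, hτ⟩
  rw [ENNReal.ofReal_pow (by norm_num)]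
  refine ofReal_pow_le_conv4E_bumps hn ?_ (abs_le.2 hτ)
  rw [abs_mul, abs_of_pos (by positivity : (0 : ℝ) < 2 * n)]
  calc 2 * n * |ξ| ≤ 2 * n * (1 / (16 * n)) := by gcongr; exact abs_le.2 hξ
    _ = 1 / 8 := by field_simp; ring

theorem XpNorm_indicator_S₁₂_le (hs : s ≤ 0) (hn : 2 ≤ n) :
    XpNorm s b ((S₁₂ n).indicator 1) ≤ .ofReal √(4 * (((n : ℝ) / 2) ^ (2 * s) * 2 ^ |2 * b|)) := by
  have hn' : (2 : ℝ) ≤ n := by exact_mod_cast hn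
  rw [XpNorm_eq_weightedNorm]
  exact weightedNorm_indicator_bumpSet_le (by fun_prop) hs (by positivity)
    (by rw [abs_of_nonneg (by positivity)]; linarith)

theorem XmNorm_indicator_S₃₄_le (hs : s ≤ 0) (hn : 2 ≤ n) :
    XmNorm s b ((S₃₄ n).indicator 1) ≤ .ofReal √(4 * (((n : ℝ) / 2) ^ (2 * s) * 2 ^ |2 * b|)) := by
  have hn' : (2 : ℝ) ≤ n := by exact_mod_cast hn
  rw [XmNorm_eq_weightedNorm]
  exact weightedNorm_indicator_bumpSet_le (by fun_prop) hs (by positivity)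
    (by rw [abs_neg, abs_of_nonneg (by positivity)]; linarith)

theorem sqrt_div_le_of_quartic_estimate {b' C : ℝ} (hs : s ≤ 0) (hC : 0 ≤ C) (hn : 2 ≤ n)
    (h : XpNorm s b' (conv4E ((S₁₂ n).indicator 1) ((S₁₂ n).indicator 1) ((S₃₄ n).indicator 1)
        ((S₃₄ n).indicator 1)) ≤ .ofReal C * XpNorm s b ((S₁₂ n).indicator 1) *
          XpNorm s b ((S₁₂ n).indicator 1) * XmNorm s b ((S₃₄ n).indicator 1) *
          XmNorm s b ((S₃₄ n).indicator 1)) :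
    √((3 : ℝ) ^ (-|2 * s|) * (3 : ℝ) ^ (-|2 * b'|) * ((1 / 8) ^ 6) ^ 2 / 32 / n) ≤
      16 * C * (2 ^ |2 * b|) ^ 2 * ((n : ℝ) / 2) ^ (4 * s) := by
  set U := √(4 * (((n : ℝ) / 2) ^ (2 * s) * 2 ^ |2 * b|))
  have hchain := (ofReal_sqrt_le_XpNorm_conv4E_bumps (by omega)).trans (h.trans (by
    grw [XpNorm_indicator_S₁₂_le hs hn, XmNorm_indicator_S₃₄_le hs hn]))
  rw [← ENNReal.ofReal_mul hC, ← ENNReal.ofReal_mul (by positivity),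
    ← ENNReal.ofReal_mul (by positivity), ← ENNReal.ofReal_mul (by positivity),
    ENNReal.ofReal_le_ofReal_iff (by positivity)] at hchain
  have hU : U * U = 4 * (((n : ℝ) / 2) ^ (2 * s) * 2 ^ |2 * b|) :=
    Real.mul_self_sqrt (by positivity)
  have hpow : (((n : ℝ) / 2) ^ (2 * s)) ^ 2 = ((n : ℝ) / 2) ^ (4 * s) := by
    rw [← Real.rpow_natCast, ← Real.rpow_mul (by positivity)]; ring_nf
  calc _ ≤ C * U * U * U * U := hchain
    _ = C * (U * U) ^ 2 := by ring
    _ = _ := by rw [hU, mul_pow, mul_pow, hpow]; ring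

theorem not_forall_sqrt_div_le_mul_rpow {A B e : ℝ} (hA : 0 < A) (he : e < -1 / 2) :
    ¬ ∀ n : ℕ, 2 ≤ n → √(A / n) ≤ B * ((n : ℝ) / 2) ^ e := by
  intro h
  have hlim : Tendsto (fun n : ℕ => B * ((n : ℝ) / 2) ^ (e + 1 / 2)) atTop (𝓝 0) := by
    have := ((tendsto_rpow_neg_atTop (y := -(e + 1 / 2)) (by linarith)).comp
      (tendsto_natCast_atTop_atTop.atTop_div_const (by norm_num : (0 : ℝ) < 2))).const_mul B
    simpa using this
  obtain ⟨n, hsmall, hn⟩ := ((hlim.eventually (gt_mem_nhds (Real.sqrt_pos.2 (half_pos hA)))).and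
    (eventually_ge_atTop 2)).exists
  have hx : (0 : ℝ) < n / 2 := by positivity
  have key : √(A / 2) ≤ B * ((n : ℝ) / 2) ^ (e + 1 / 2) :=
    calc √(A / 2) = √(A / n) * ((n : ℝ) / 2) ^ (1 / 2 : ℝ) := by
          rw [← Real.sqrt_eq_rpow, ← Real.sqrt_mul (by positivity)]
          congr 1; field_simp
      _ ≤ B * ((n : ℝ) / 2) ^ e * ((n : ℝ) / 2) ^ (1 / 2 : ℝ) := by gcongr; exact h n hn
      _ = B * ((n : ℝ) / 2) ^ (e + 1 / 2) := by rw [Real.rpow_add hx]; ring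
  linarith

end Counterexample

/-- The fourfold convolution of the counterexample bumps dominates
`c χ_{[-c,c]}(2nξ) χ_{[-c,c]}(τ)` for large `n`; consequently the estimate
`‖u₁u₂ū₃ū₄‖_{X^+_{s,b'}} ≤ c ∏ ‖uᵢ‖_{X^+_{s,b}}` on `ℝ` fails for all `s < −1/8`
and all `b, b'`. -/
theorem quartic_failure_nonperiodic :
    (∃ c > (0 : ℝ), ∃ N : ℕ, ∀ n : ℕ, N ≤ n → ∀ p : ℝ × ℝ,
      c * ((if |2 * (n : ℝ) * p.1| ≤ c then 1 else 0) *
          (if |p.2| ≤ c then (1 : ℝ) else 0)) ≤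
        conv4R (g₁₂ n) (g₁₂ n) (g₃₄ n) (g₃₄ n) p) ∧
    ∀ s : ℝ, s < -(1 / 8 : ℝ) → ∀ b b' : ℝ,
      ¬ ∃ C : ℝ, 0 < C ∧ ∀ F₁ F₂ F₃ F₄ : ℝ × ℝ → ℝ≥0∞,
        Measurable F₁ → Measurable F₂ → Measurable F₃ → Measurable F₄ →
        XpNorm s b' (conv4E F₁ F₂ F₃ F₄) ≤
          ENNReal.ofReal C * XpNorm s b F₁ * XpNorm s b F₂ * XmNorm s b F₃ *
            XmNorm s b F₄ := by
  refine ⟨⟨(1 / 8) ^ 6, by norm_num, 1, fun n hn ⟨ξ, τ⟩ => ?_⟩, ?_⟩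
  · rw [conv4R_bumps_eq_toReal]
    split_ifs with hξ hτ
    · rw [mul_one, mul_one, ← ENNReal.toReal_ofReal (by norm_num : (0 : ℝ) ≤ (1 / 8) ^ 6),
        ENNReal.ofReal_pow (by norm_num)]
      exact ENNReal.toReal_mono (conv4E_bumps_ne_top n _)
        (ofReal_pow_le_conv4E_bumps hn (hξ.trans (by norm_num)) (hτ.trans (by norm_num)))
    all_goals simp only [mul_zero, zero_mul, ENNReal.toReal_nonneg]
  · rintro s hs b b' ⟨C, hC, hbound⟩
    have h₁₂ (n : ℕ) := measurable_one.indicator (measurableSet_S₁₂ n) (f := (1 : ℝ × ℝ → ℝ≥0∞))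
    have h₃₄ (n : ℕ) := measurable_one.indicator (measurableSet_S₃₄ n) (f := (1 : ℝ × ℝ → ℝ≥0∞))
    exact not_forall_sqrt_div_le_mul_rpow (by positivity) (by linarith) fun n hn =>
      sqrt_div_le_of_quartic_estimate (by linarith) hC.le hn
        (hbound _ _ _ _ (h₁₂ n) (h₁₂ n) (h₃₄ n) (h₃₄ n))
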